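/- arXiv:1812.05528 — 5 statements merged into one kernel-verified Lean document; each statement's English description precedes it below -/
import Mathlib

section
/- Let G be a 4-regular multigraph on a finite vertex set. If the simplification S(G) of G is a tree, then S(G) is a path, i.e., S(G) is isomorphic to the path graph on |V| vertices. -/
open Finset

section StmtAux

open SimpleGraph

variable {V : Type*} {S : SimpleGraph V}

private lemma path_eq' (htree : S.IsTree) {u v : V} {p q : S.Walk u v}
    (hp : p.IsPath) (hq : q.IsPath) : p = q := by
  have := htree.IsAcyclic.path_unique ⟨p, hp⟩ ⟨q, hq⟩
  exact congrArg Subtype.val this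

private lemma dist_le_of_mem_support' [DecidableEq V] {r u w : V} (p : S.Walk r u) (hw : w ∈ p.support) :
    S.dist r w ≤ p.length :=
  le_trans (SimpleGraph.dist_le (p.takeUntil w hw)) (SimpleGraph.Walk.length_takeUntil_le p hw)

private lemma dist_lt_of_mem_support' [DecidableEq V] {r u w : V} (p : S.Walk r u)
    (hw : w ∈ p.support) (hne : w ≠ u) : S.dist r w < p.length := by
  have hspec := SimpleGraph.Walk.take_spec p hw
  have hlen : (p.takeUntil w hw).length + (p.dropUntil w hw).length = p.length := by
    rw [← SimpleGraph.Walk.length_append, hspec]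
  have hpos : 0 < (p.dropUntil w hw).length := by
    rcases Nat.eq_zero_or_pos (p.dropUntil w hw).length with h0 | h
    · exact absurd (SimpleGraph.Walk.eq_of_length_eq_zero h0) hne
    · exact h
  have := SimpleGraph.dist_le (p.takeUntil w hw)
  omega

private lemma concat_isPath' {r u v : V} {p : S.Walk r u} (hp : p.IsPath)
    (h : S.Adj u v) (hv : v ∉ p.support) : (p.concat h).IsPath := by
  rw [← SimpleGraph.Walk.isPath_reverse_iff, SimpleGraph.Walk.reverse_concat,
    SimpleGraph.Walk.cons_isPath_iff]
  refine ⟨(SimpleGraph.Walk.isPath_reverse_iff _).mpr hp, ?_⟩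
  simpa using hv

private lemma adj_dist' [DecidableEq V] (htree : S.IsTree) {u v : V} (h : S.Adj u v) (r : V) :
    S.dist r u + 1 = S.dist r v ∨ S.dist r v + 1 = S.dist r u := by
  have hconn := htree.isConnected
  have h1 : S.dist r v ≤ S.dist r u + 1 := by
    have := hconn.dist_triangle (u := r) (v := u) (w := v)
    rwa [SimpleGraph.dist_eq_one_iff_adj.mpr h] at this
  have h2 : S.dist r u ≤ S.dist r v + 1 := by
    have := hconn.dist_triangle (u := r) (v := v) (w := u)
    rwa [SimpleGraph.dist_eq_one_iff_adj.mpr h.symm] at this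
  have hne : S.dist r u ≠ S.dist r v := by
    intro heq
    obtain ⟨p, hp, hplen⟩ := hconn.exists_path_of_dist r u
    have hvns : v ∉ p.support := by
      intro hv
      have := dist_lt_of_mem_support' p hv h.ne'
      omega
    have hq : (p.concat h).IsPath := concat_isPath' hp h hvns
    obtain ⟨q, hqp, hqlen⟩ := hconn.exists_path_of_dist r v
    have heq2 := path_eq' htree hq hqp
    have hlen := congrArg SimpleGraph.Walk.length heq2
    rw [SimpleGraph.Walk.length_concat] at hlen
    omega
  omega

private lemma parent_exists' (hconn : S.Connected) {r v : V} (hv : v ≠ r) :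
    ∃ u, S.Adj v u ∧ S.dist r u + 1 = S.dist r v := by
  obtain ⟨p, hp, hplen⟩ := hconn.exists_path_of_dist r v
  obtain ⟨w, hadj, q, hq⟩ := SimpleGraph.Walk.exists_eq_cons_of_ne hv p.reverse
  refine ⟨w, hadj, ?_⟩
  have h1 : S.dist r w ≤ q.length := by
    have h := SimpleGraph.dist_le q.reverse
    rw [SimpleGraph.Walk.length_reverse] at h
    exact h
  have hlq : q.length + 1 = S.dist r v := by
    have hlen := congrArg SimpleGraph.Walk.length hq
    rw [SimpleGraph.Walk.length_reverse, SimpleGraph.Walk.length_cons] at hlen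
    omega
  have h2 : S.dist r v ≤ S.dist r w + 1 := by
    have ht := hconn.dist_triangle (u := r) (v := w) (w := v)
    rwa [SimpleGraph.dist_eq_one_iff_adj.mpr hadj.symm] at ht
  omega

private lemma parent_unique' [DecidableEq V] (htree : S.IsTree) {r v x y : V}
    (hx : S.Adj v x) (hdx : S.dist r x + 1 = S.dist r v)
    (hy : S.Adj v y) (hdy : S.dist r y + 1 = S.dist r v) : x = y := by
  by_contra hxy
  have hconn := htree.isConnected
  obtain ⟨px, hpx, hpxlen⟩ := hconn.exists_path_of_dist r x
  obtain ⟨py, hpy, hpylen⟩ := hconn.exists_path_of_dist r y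
  have hvx : v ∉ px.support := fun hv => by
    have := dist_le_of_mem_support' px hv; omega
  have hvy : v ∉ py.support := fun hv => by
    have := dist_le_of_mem_support' py hv; omega
  have hq1 : (px.concat hx.symm).IsPath := concat_isPath' hpx hx.symm hvx
  have hq2 : (py.concat hy.symm).IsPath := concat_isPath' hpy hy.symm hvy
  have heq := path_eq' htree hq1 hq2
  have hmem : s(x, v) ∈ (px.concat hx.symm).edges := by
    rw [SimpleGraph.Walk.edges_concat]
    simp
  rw [heq, SimpleGraph.Walk.edges_concat] at hmem
  rw [List.concat_eq_append] at hmem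
  rcases List.mem_append.mp hmem with hmem | hmem
  · exact hvy (SimpleGraph.Walk.snd_mem_support_of_mem_edges py hmem)
  · rw [List.mem_singleton] at hmem
    rcases Sym2.eq_iff.mp hmem with ⟨h1, _⟩ | ⟨h1, _⟩
    · exact hxy h1
    · exact hx.ne' h1

private lemma dist_lt_card' [Fintype V] (hconn : S.Connected) (r v : V) :
    S.dist r v < Fintype.card V := by
  obtain ⟨p, hp, hlen⟩ := hconn.exists_path_of_dist r v
  rw [← hlen]
  exact hp.length_lt

private lemma even_m' [Fintype V] [DecidableEq V]
    (m : V → V → ℕ) (hsym : ∀ u v, m u v = m v u)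
    (hreg : ∀ v : V, (∑ u ∈ Finset.univ.filter (· ≠ v), m v u) + 2 * m v v = 4)
    (hS : ∀ u v, S.Adj u v ↔ u ≠ v ∧ 1 ≤ m u v)
    (htree : S.IsTree) : ∀ u v : V, u ≠ v → Even (m u v) := by
  have hconn := htree.isConnected
  obtain ⟨r⟩ := hconn.nonempty
  have key : ∀ k (v x : V), Fintype.card V - S.dist r v ≤ k → S.Adj v x →
      S.dist r x + 1 = S.dist r v → Even (m v x) := by
    intro k
    induction k with
    | zero =>
      intro v x hk _ _
      have := dist_lt_card' hconn r v
      omega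
    | succ k ih =>
      intro v x hk hadj hdx
      have hxmem : x ∈ Finset.univ.filter (· ≠ v) := by
        simp only [Finset.mem_filter, Finset.mem_univ, true_and]
        exact hadj.ne'
      have hsplit := Finset.add_sum_erase _ (fun u => m v u) hxmem
      have hrest : Even (∑ u ∈ (Finset.univ.filter (· ≠ v)).erase x, m v u) := by
        apply Finset.even_sum
        intro y hy
        obtain ⟨hyx, hymem⟩ := Finset.mem_erase.mp hy
        have hyv : y ≠ v := by
          simpa using (Finset.mem_filter.mp hymem).2
        rcases Nat.eq_zero_or_pos (m v y) with h0 | hpos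
        · simp [h0]
        · have hady : S.Adj v y := (hS v y).mpr ⟨hyv.symm, hpos⟩
          rcases adj_dist' htree hady r with hcase | hcase
          · have hy_even : Even (m y v) := by
              have hdlt := dist_lt_card' hconn r v
              exact ih y v (by omega) hady.symm (by omega)
            rw [hsym v y]
            exact hy_even
          · exact absurd (parent_unique' htree hady hcase hadj hdx) hyx
      have htotal : Even (∑ u ∈ Finset.univ.filter (· ≠ v), m v u) := by
        have h4 := hreg v
        have hev : Even ((∑ u ∈ Finset.univ.filter (· ≠ v), m v u) + 2 * m v v) := by
          rw [h4]; exact ⟨2, rfl⟩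
        have h2 : Even (2 * m v v) := ⟨m v v, by ring⟩
        exact (Nat.even_add.mp hev).mpr h2
      rw [← hsplit] at htotal
      exact (Nat.even_add.mp htotal).mpr hrest
  intro u v huv
  rcases Nat.eq_zero_or_pos (m u v) with h0 | hpos
  · simp [h0]
  · have hadj : S.Adj u v := (hS u v).mpr ⟨huv, hpos⟩
    rcases adj_dist' htree hadj r with hcase | hcase
    · have := key (Fintype.card V) v u (by omega) hadj.symm hcase
      rwa [hsym u v]
    · exact key (Fintype.card V) u v (by omega) hadj hcase

end StmtAux

/-- If the simplification of a 4-regular multigraph is a tree,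
then it is a path. A multigraph on a finite vertex set `V` is given by a
symmetric multiplicity function `m : V → V → ℕ` (`m v v` counts loops at `v`);
the degree of `v` is `(∑ u ≠ v, m v u) + 2 * m v v`. The simplification `S` is
the simple graph where distinct `u v` are adjacent iff `m u v ≥ 1`. -/
theorem stmt0 {V : Type*} [Fintype V] [DecidableEq V]
    (m : V → V → ℕ) (hsym : ∀ u v, m u v = m v u)
    (hreg : ∀ v : V, (∑ u ∈ Finset.univ.filter (· ≠ v), m v u) + 2 * m v v = 4)
    (S : SimpleGraph V) (hS : ∀ u v, S.Adj u v ↔ u ≠ v ∧ 1 ≤ m u v)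
    (htree : S.IsTree) :
    Nonempty (S ≃g SimpleGraph.pathGraph (Fintype.card V)) := by
  classical
  have hconn := htree.isConnected
  obtain ⟨v₀⟩ := hconn.nonempty
  have hE := even_m' m hsym hreg hS htree
  have hm2 : ∀ u v, S.Adj u v → 2 ≤ m u v := by
    intro u v h
    obtain ⟨hne, h1⟩ := (hS u v).mp h
    obtain ⟨c, hc⟩ := hE u v hne
    omega
  have hdeg : ∀ v : V, (Finset.univ.filter (fun x => S.Adj v x)).card ≤ 2 := by
    intro v
    have hsub : Finset.univ.filter (fun x => S.Adj v x) ⊆ Finset.univ.filter (· ≠ v) := by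
      intro x hx
      simp only [Finset.mem_filter, Finset.mem_univ, true_and] at hx ⊢
      exact hx.ne'
    have h1 : 2 * (Finset.univ.filter (fun x => S.Adj v x)).card ≤
        ∑ x ∈ Finset.univ.filter (fun x => S.Adj v x), m v x := by
      calc 2 * (Finset.univ.filter (fun x => S.Adj v x)).card
          = ∑ _x ∈ Finset.univ.filter (fun x => S.Adj v x), 2 := by
            rw [Finset.sum_const, smul_eq_mul, mul_comm]
        _ ≤ ∑ x ∈ Finset.univ.filter (fun x => S.Adj v x), m v x :=
            Finset.sum_le_sum (fun x hx => hm2 v x (by simpa using hx))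
    have h2 : ∑ x ∈ Finset.univ.filter (fun x => S.Adj v x), m v x ≤
        ∑ x ∈ Finset.univ.filter (· ≠ v), m v x :=
      Finset.sum_le_sum_of_subset hsub
    have h3 := hreg v
    omega
  by_cases htriv : ∀ v : V, v = v₀
  · -- single-vertex case
    have hcard : Fintype.card V = 1 := Fintype.card_eq_one_iff.mpr ⟨v₀, fun v => htriv v⟩
    refine ⟨⟨Fintype.equivFin V, ?_⟩⟩
    intro u v
    have huv : u = v := (htriv u).trans (htriv v).symm
    subst huv
    constructor
    · intro h
      exact absurd h (SimpleGraph.irrefl _)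
    · intro h
      exact absurd rfl h.ne
  · push_neg at htriv
    obtain ⟨w₀, hw₀⟩ := htriv
    obtain ⟨r, -, hrmax⟩ := Finset.exists_max_image Finset.univ (S.dist v₀) ⟨v₀, mem_univ v₀⟩
    have hrne : r ≠ v₀ := by
      intro h
      have h1 : 0 < S.dist v₀ w₀ := hconn.pos_dist_of_ne (fun hh => hw₀ hh.symm)
      have h2 := hrmax w₀ (mem_univ w₀)
      rw [h, SimpleGraph.dist_self] at h2
      omega
    have hleaf : ∀ x y, S.Adj r x → S.Adj r y → x = y := by
      intro x y hx hy
      have hdx : S.dist v₀ x + 1 = S.dist v₀ r := by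
        rcases adj_dist' htree hx v₀ with h | h
        · have := hrmax x (mem_univ x); omega
        · exact h
      have hdy : S.dist v₀ y + 1 = S.dist v₀ r := by
        rcases adj_dist' htree hy v₀ with h | h
        · have := hrmax y (mem_univ y); omega
        · exact h
      exact parent_unique' htree hx hdx hy hdy
    have hbound : ∀ v, S.dist r v < Fintype.card V := fun v => dist_lt_card' hconn r v
    have huniq : ∀ d (u w : V), S.dist r u = d → S.dist r w = d → u = w := by
      intro d
      induction d with
      | zero =>
        intro u w hu hw
        rw [hconn.dist_eq_zero_iff] at hu hw
        exact hu.symm.trans hw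
      | succ d ih =>
        intro u w hu hw
        by_contra huw
        have hur : u ≠ r := by
          intro h; subst h; rw [SimpleGraph.dist_self] at hu; omega
        have hwr : w ≠ r := by
          intro h; subst h; rw [SimpleGraph.dist_self] at hw; omega
        obtain ⟨pu, hpu_adj, hpu_d⟩ := parent_exists' hconn hur
        obtain ⟨pw, hpw_adj, hpw_d⟩ := parent_exists' hconn hwr
        have hpeq : pw = pu := ih pw pu (by omega) (by omega)
        subst hpeq
        by_cases hpr : pw = r
        · subst hpr
          exact huw (hleaf u w hpu_adj.symm hpw_adj.symm)
        · obtain ⟨q, hq_adj, hq_d⟩ := parent_exists' hconn hpr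
          have hqu : q ≠ u := by
            intro h; subst h; omega
          have hqw : q ≠ w := by
            intro h; subst h; omega
          have hset : ({u, w, q} : Finset V) ⊆
              Finset.univ.filter (fun x => S.Adj pw x) := by
            intro x hx
            simp only [Finset.mem_insert, Finset.mem_singleton] at hx
            simp only [Finset.mem_filter, Finset.mem_univ, true_and]
            rcases hx with rfl | rfl | rfl
            · exact hpu_adj.symm
            · exact hpw_adj.symm
            · exact hq_adj
          have hcard3 : ({u, w, q} : Finset V).card = 3 :=
            Finset.card_eq_three.mpr ⟨u, w, q, huw, hqu.symm, hqw.symm, rfl⟩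
          have hle := Finset.card_le_card hset
          have := hdeg pw
          omega
    have fadj : ∀ u v : V, S.Adj u v ↔
        (S.dist r u + 1 = S.dist r v ∨ S.dist r v + 1 = S.dist r u) := by
      intro u v
      constructor
      · exact fun h => adj_dist' htree h r
      · rintro (h | h)
        · have hvr : v ≠ r := by
            intro hh; subst hh; rw [SimpleGraph.dist_self] at h; omega
          obtain ⟨p, hp_adj, hp_d⟩ := parent_exists' hconn hvr
          have hpu : p = u := huniq (S.dist r u) p u (by omega) rfl
          subst hpu
          exact hp_adj.symm
        · have hur : u ≠ r := by
            intro hh; subst hh; rw [SimpleGraph.dist_self] at h; omega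
          obtain ⟨p, hp_adj, hp_d⟩ := parent_exists' hconn hur
          have hpv : p = v := huniq (S.dist r v) p v (by omega) rfl
          subst hpv
          exact hp_adj
    let g : V → Fin (Fintype.card V) := fun v => ⟨S.dist r v, hbound v⟩
    have hginj : Function.Injective g := by
      intro a b hab
      have : S.dist r a = S.dist r b := congrArg Fin.val hab
      exact huniq (S.dist r b) a b this rfl
    have hgbij : Function.Bijective g :=
      (Fintype.bijective_iff_injective_and_card g).mpr ⟨hginj, by simp⟩
    refine ⟨⟨Equiv.ofBijective g hgbij, ?_⟩⟩
    intro u v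
    rw [SimpleGraph.pathGraph_adj]
    show ((S.dist r u + 1 = S.dist r v) ∨ (S.dist r v + 1 = S.dist r u)) ↔ S.Adj u v
    exact (fadj u v).symm
end

section
/- Let G be a 4-regular multigraph on a finite vertex set V whose simplification S(G) is a tree. Then every arc of S(G) is even; that is, for all distinct vertices u, v ∈ V, the multiplicity m u v is an even number. -/
open Finset

/-- If the simplification `S` of a 4-regular multigraph
(given by a symmetric multiplicity function `m`) is a tree, then every arc of
`S` is even: for all distinct `u v`, the multiplicity `m u v` is even. -/
theorem stmt2 {V : Type*} [Fintype V] [DecidableEq V]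
    (m : V → V → ℕ) (hsym : ∀ u v, m u v = m v u)
    (hreg : ∀ v : V, (∑ u ∈ Finset.univ.filter (· ≠ v), m v u) + 2 * m v v = 4)
    (S : SimpleGraph V) (hS : ∀ u v, S.Adj u v ↔ u ≠ v ∧ 1 ≤ m u v)
    (htree : S.IsTree) :
    ∀ u v : V, u ≠ v → Even (m u v) := by
  classical
  intro u v huv
  rcases Nat.eq_zero_or_pos (m u v) with h0 | hpos
  · simp [h0]
  have hAdj : S.Adj u v := (hS u v).mpr ⟨huv, hpos⟩
  -- the edge uv is a bridge
  have hbridge : S.IsBridge s(u, v) :=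
    (SimpleGraph.isAcyclic_iff_forall_adj_isBridge.mp htree.IsAcyclic) hAdj
  set G' : SimpleGraph V := S.deleteEdges {s(u, v)} with hG'
  have hG'eq : G' = S \ SimpleGraph.fromEdgeSet {s(u, v)} := rfl
  set A : Finset V := univ.filter (fun w => G'.Reachable u w) with hA
  clear_value A
  have huA : u ∈ A := by
    simp only [hA, mem_filter, mem_univ, true_and]
    exact SimpleGraph.Reachable.refl u
  have hvA : v ∉ A := by
    simp only [hA, mem_filter, mem_univ, true_and]
    rw [hG'eq]
    exact hbridge
  -- crossing lemma
  have hcross : ∀ a b : V, a ∈ A → b ∉ A → S.Adj a b → a = u ∧ b = v := by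
    intro a b ha hb hab
    have haR : G'.Reachable u a := by simpa [hA] using ha
    have hbR : ¬ G'.Reachable u b := by simpa [hA] using hb
    by_cases he : s(a, b) = s(u, v)
    · rcases Sym2.eq_iff.mp he with ⟨rfl, rfl⟩ | ⟨rfl, rfl⟩
      · exact ⟨rfl, rfl⟩
      · exact absurd ha hvA
    · have : G'.Adj a b := by
        rw [hG', SimpleGraph.deleteEdges_adj]
        exact ⟨hab, by simpa using he⟩
      exact absurd (haR.trans this.reachable) hbR
  -- all crossing multiplicities other than (u,v) are zero
  have hzero : ∀ a b : V, a ∈ A → b ∉ A → (a, b) ≠ (u, v) → m a b = 0 := by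
    intro a b ha hb hne
    by_contra h
    have hab : a ≠ b := fun h' => hb (h' ▸ ha)
    have : S.Adj a b := (hS a b).mpr ⟨hab, Nat.one_le_iff_ne_zero.mpr h⟩
    obtain ⟨rfl, rfl⟩ := hcross a b ha hb this
    exact hne rfl
  -- the crossing sum equals m u v
  have hcsum : ∑ p ∈ A ×ˢ Aᶜ, m p.1 p.2 = m u v := by
    rw [Finset.sum_eq_single_of_mem (u, v)]
    · exact Finset.mem_product.mpr ⟨huA, Finset.mem_compl.mpr hvA⟩
    · intro p hp hne
      rw [Finset.mem_product, Finset.mem_compl] at hp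
      exact hzero p.1 p.2 hp.1 hp.2 (by simpa using hne)
  -- the internal sum is even
  have hintern : Even (∑ p ∈ (A ×ˢ A).filter (fun p => p.1 ≠ p.2), m p.1 p.2) := by
    set e := (Fintype.equivFin V)
    set T := (A ×ˢ A).filter (fun p => p.1 ≠ p.2) with hT
    have hsplit : ∑ p ∈ T, m p.1 p.2
        = ∑ p ∈ T.filter (fun p => e p.1 < e p.2), m p.1 p.2
        + ∑ p ∈ T.filter (fun p => ¬ e p.1 < e p.2), m p.1 p.2 :=
      (Finset.sum_filter_add_sum_filter_not _ _ _).symm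
    have hbij : ∑ p ∈ T.filter (fun p => ¬ e p.1 < e p.2), m p.1 p.2
        = ∑ p ∈ T.filter (fun p => e p.1 < e p.2), m p.1 p.2 := by
      apply Finset.sum_nbij' (fun p => Prod.swap p) (fun p => Prod.swap p)
      · intro p hp
        simp only [hT, Finset.mem_filter, Finset.mem_product] at hp ⊢
        have hne : e p.1 ≠ e p.2 := fun h => hp.1.2 (e.injective h)
        exact ⟨⟨⟨hp.1.1.2, hp.1.1.1⟩, hp.1.2.symm⟩, lt_of_le_of_ne (not_lt.mp hp.2) hne.symm⟩
      · intro p hp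
        simp only [hT, Finset.mem_filter, Finset.mem_product] at hp ⊢
        exact ⟨⟨⟨hp.1.1.2, hp.1.1.1⟩, hp.1.2.symm⟩, not_lt.mpr (le_of_lt hp.2)⟩
      · intro p _; rfl
      · intro p _; rfl
      · intro p _; exact hsym p.1 p.2
    rw [hsplit, hbij]
    exact ⟨_, rfl⟩
  -- decompose the degree sum over A
  have hdeg : ∀ a ∈ A,
      (∑ b ∈ univ.filter (· ≠ a), m a b)
        = (∑ b ∈ A.filter (· ≠ a), m a b) + ∑ b ∈ Aᶜ, m a b := by
    intro a ha
    rw [← Finset.sum_union]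
    · apply Finset.sum_congr _ (fun _ _ => rfl)
      ext b
      simp only [Finset.mem_filter, Finset.mem_univ, true_and, Finset.mem_union,
        Finset.mem_compl]
      constructor
      · intro hb
        by_cases hbA : b ∈ A
        · exact Or.inl ⟨hbA, hb⟩
        · exact Or.inr hbA
      · rintro (⟨_, hb⟩ | hb)
        · exact hb
        · exact fun h => hb (h ▸ ha)
    · rw [Finset.disjoint_left]
      intro b hb hb'
      exact (Finset.mem_compl.mp hb') (Finset.mem_filter.mp hb).1
  have hsumA : ∑ a ∈ A, ((∑ b ∈ univ.filter (· ≠ a), m a b) + 2 * m a a) = 4 * A.card := by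
    rw [Finset.sum_congr rfl (fun a _ => hreg a)]
    simp [mul_comm]
  have hexpand : ∑ a ∈ A, ((∑ b ∈ univ.filter (· ≠ a), m a b) + 2 * m a a)
      = (∑ p ∈ (A ×ˢ A).filter (fun p => p.1 ≠ p.2), m p.1 p.2)
        + (∑ p ∈ A ×ˢ Aᶜ, m p.1 p.2)
        + 2 * ∑ a ∈ A, m a a := by
    rw [Finset.sum_add_distrib, ← Finset.mul_sum]
    congr 1
    rw [Finset.sum_congr rfl hdeg, Finset.sum_add_distrib]
    have key1 : ∑ p ∈ (A ×ˢ A).filter (fun p => p.1 ≠ p.2), m p.1 p.2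
        = ∑ a ∈ A, ∑ b ∈ A.filter (· ≠ a), m a b := by
      rw [Finset.sum_filter, Finset.sum_product]
      apply Finset.sum_congr rfl
      intro a _
      rw [Finset.sum_filter]
      exact Finset.sum_congr rfl fun b _ => by simp [ne_comm]
    rw [key1, ← Finset.sum_product']
  obtain ⟨s, hs⟩ := hintern
  rw [hexpand, hcsum, hs] at hsumA
  rw [Nat.even_iff]
  omega
end

section
/- Let G be a 4-regular multigraph on a finite vertex set V whose simplification S(G) is a tree. Then every vertex of S(G) has degree at most 2 in S(G). -/
open Finset

/-- Every edge of the tree-simplification of a 4-regular multigraph has even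
multiplicity, hence multiplicity at least 2. -/
lemma edge_mult_two {V : Type*} [Fintype V] [DecidableEq V]
    (m : V → V → ℕ) (hsym : ∀ u v, m u v = m v u)
    (hreg : ∀ v : V, (∑ u ∈ Finset.univ.filter (· ≠ v), m v u) + 2 * m v v = 4)
    (S : SimpleGraph V) (hS : ∀ u v, S.Adj u v ↔ u ≠ v ∧ 1 ≤ m u v)
    (htree : S.IsTree) {u v : V} (huv : S.Adj u v) : 2 ≤ m u v := by
  classical
  set G' : SimpleGraph V := S \ SimpleGraph.fromEdgeSet {s(u, v)} with hG'
  set A : Finset V := Finset.univ.filter (fun w => G'.Reachable w u) with hA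
  have hu : u ∈ A := by
    simp only [hA, mem_filter, mem_univ, true_and]
    exact SimpleGraph.Reachable.refl u
  have hv : v ∉ A := by
    simp only [hA, mem_filter, mem_univ, true_and]
    intro h
    obtain ⟨x, p, hp, -⟩ :=
      (SimpleGraph.adj_and_reachable_delete_edges_iff_exists_cycle).mp
        ⟨huv.symm, by rwa [Sym2.eq_swap]⟩
    exact htree.IsAcyclic p hp
  -- crossing edges (in the multigraph) must be the edge u-v
  have hcross : ∀ w ∈ A, ∀ x, x ∉ A → 1 ≤ m w x → w = u ∧ x = v := by
    intro w hw x hx hm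
    have hwx : w ≠ x := by rintro rfl; exact hx hw
    have hadj : S.Adj w x := (hS w x).mpr ⟨hwx, hm⟩
    by_cases he : s(w, x) = s(u, v)
    · rcases Sym2.eq_iff.mp he with ⟨rfl, rfl⟩ | ⟨rfl, rfl⟩
      · exact ⟨rfl, rfl⟩
      · exact absurd hw hv
    · exfalso
      have hadj' : G'.Adj x w := by
        simp only [hG', SimpleGraph.sdiff_adj, SimpleGraph.fromEdgeSet_adj,
          Set.mem_singleton_iff]
        refine ⟨hadj.symm, ?_⟩
        rintro ⟨h, -⟩
        exact he (by rwa [Sym2.eq_swap] at h)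
      have hwreach : G'.Reachable w u := by
        simpa [hA] using hw
      apply hx
      simp only [hA, mem_filter, mem_univ, true_and]
      exact hadj'.reachable.trans hwreach
  -- parity computation in ZMod 2
  have hinner : ∀ w : V,
      (∑ x ∈ Finset.univ.filter (· ≠ w), (m w x : ZMod 2)) = 0 := by
    intro w
    have := hreg w
    have : ((∑ x ∈ Finset.univ.filter (· ≠ w), m w x : ℕ) : ZMod 2)
        + 2 * (m w w : ZMod 2) = 4 := by exact_mod_cast congrArg (Nat.cast : ℕ → ZMod 2) this
    push_cast at this ⊢
    have h2 : (2 : ZMod 2) = 0 := by decide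
    have h4 : (4 : ZMod 2) = 0 := by decide
    rw [h2, h4, zero_mul, add_zero] at this
    exact this
  have hT : (∑ w ∈ A, ∑ x ∈ Finset.univ.filter (· ≠ w), (m w x : ZMod 2)) = 0 := by
    simp [hinner]
  -- split each inner sum by membership in A
  have hsplit : ∀ w ∈ A,
      (∑ x ∈ Finset.univ.filter (· ≠ w), (m w x : ZMod 2)) =
        (∑ x ∈ (Finset.univ.filter (· ≠ w)).filter (· ∈ A), (m w x : ZMod 2))
        + (∑ x ∈ Finset.univ.filter (· ∉ A), (m w x : ZMod 2)) := by
    intro w hw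
    rw [← Finset.sum_filter_add_sum_filter_not (Finset.univ.filter (· ≠ w)) (· ∈ A)]
    congr 1
    apply Finset.sum_congr _ (fun _ _ => rfl)
    ext x
    simp only [mem_filter, mem_univ, true_and]
    constructor
    · rintro ⟨-, h⟩; exact h
    · intro h; exact ⟨fun hxw => h (hxw ▸ hw), h⟩
  rw [Finset.sum_congr rfl hsplit, Finset.sum_add_distrib] at hT
  -- the internal part vanishes by symmetry
  have hint : (∑ w ∈ A, ∑ x ∈ (Finset.univ.filter (· ≠ w)).filter (· ∈ A),
      (m w x : ZMod 2)) = 0 := by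
    rw [Finset.sum_sigma']
    have gmem : ∀ p ∈ (A.sigma fun w =>
        (Finset.univ.filter (· ≠ w)).filter (· ∈ A)),
        (⟨p.2, p.1⟩ : (_ : V) × V) ∈ (A.sigma fun w =>
        (Finset.univ.filter (· ≠ w)).filter (· ∈ A)) := by
      intro p hp
      simp only [Finset.mem_sigma, mem_filter, mem_univ, true_and] at hp ⊢
      exact ⟨hp.2.2, hp.2.1.symm, hp.1⟩
    refine Finset.sum_involution (fun p _ => ⟨p.2, p.1⟩) ?_ ?_ gmem ?_
    · intro p hp
      have : (m p.2 p.1 : ZMod 2) = (m p.1 p.2 : ZMod 2) := by rw [hsym]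
      rw [this]
      have h2 : (2 : ZMod 2) = 0 := by decide
      rw [← two_mul, h2, zero_mul]
    · intro p hp _
      simp only [Finset.mem_sigma, mem_filter, mem_univ, true_and] at hp
      intro hcontra
      have h1 : p.snd = p.fst := congrArg Sigma.fst hcontra
      exact hp.2.1 h1
    · intro p hp; rfl
  rw [hint, zero_add] at hT
  -- the crossing part equals m u v
  have hcrossum : (∑ w ∈ A, ∑ x ∈ Finset.univ.filter (· ∉ A), (m w x : ZMod 2))
      = (m u v : ZMod 2) := by
    rw [Finset.sum_eq_single u]
    · rw [Finset.sum_eq_single v]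
      · intro x hx hxv
        simp only [mem_filter, mem_univ, true_and] at hx
        by_contra h
        have hm : 1 ≤ m u x := by
          by_contra h1
          push_neg at h1
          interval_cases h2 : m u x
          · simp at h
        exact hxv (hcross u hu x hx hm).2
      · intro hvmem
        exact absurd (by simp [mem_filter, hv]) hvmem
    · intro w hw hwu
      apply Finset.sum_eq_zero
      intro x hx
      simp only [mem_filter, mem_univ, true_and] at hx
      by_contra h
      have hm : 1 ≤ m w x := by
        by_contra h1
        push_neg at h1
        interval_cases h2 : m w x
        · simp at h
      exact hwu (hcross w hw x hx hm).1
    · intro hu'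
      exact absurd hu hu'
  rw [hcrossum] at hT
  have heven : 2 ∣ m u v := by
    exact (ZMod.natCast_eq_zero_iff (m u v) 2).mp hT
  have h1 : 1 ≤ m u v := ((hS u v).mp huv).2
  omega

/-- If the simplification `S` of a 4-regular multigraph
(given by a symmetric multiplicity function `m`) is a tree, then every vertex
has degree at most 2 in `S`, i.e. at most two vertices `u ≠ v` with
`m u v ≥ 1`. -/
theorem stmt3 {V : Type*} [Fintype V] [DecidableEq V]
    (m : V → V → ℕ) (hsym : ∀ u v, m u v = m v u)
    (hreg : ∀ v : V, (∑ u ∈ Finset.univ.filter (· ≠ v), m v u) + 2 * m v v = 4)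
    (S : SimpleGraph V) (hS : ∀ u v, S.Adj u v ↔ u ≠ v ∧ 1 ≤ m u v)
    (htree : S.IsTree) :
    ∀ v : V, (Finset.univ.filter (fun u => u ≠ v ∧ 1 ≤ m u v)).card ≤ 2 := by
  classical
  intro v
  set N := Finset.univ.filter (fun u => u ≠ v ∧ 1 ≤ m u v) with hN
  have hsub : N ⊆ Finset.univ.filter (· ≠ v) := by
    intro u hu
    simp only [hN, mem_filter, mem_univ, true_and] at hu ⊢
    exact hu.1
  have hbound : 2 * N.card ≤ ∑ u ∈ Finset.univ.filter (· ≠ v), m v u := by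
    calc 2 * N.card = ∑ u ∈ N, 2 := by rw [Finset.sum_const, smul_eq_mul, mul_comm]
    _ ≤ ∑ u ∈ N, m v u := by
        apply Finset.sum_le_sum
        intro u hu
        simp only [hN, mem_filter, mem_univ, true_and] at hu
        have : S.Adj v u := (hS v u).mpr ⟨hu.1.symm, by rw [hsym]; exact hu.2⟩
        exact edge_mult_two m hsym hreg S hS htree this
    _ ≤ _ := Finset.sum_le_sum_of_subset hsub
  have := hreg v
  omega
end

section
/- Let G be a connected 4-regular multigraph on a finite vertex set V, and suppose its simplification S(G) admits a tree decomposition of width at most 1. Then S(G) is a path, i.e., S(G) is isomorphic to the path graph on |V| vertices. -/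
open Finset

section Stmt5Helpers
open SimpleGraph

universe u

variable {V : Type u} {I : Type*}


lemma getVert_eq_support_getElem {G : SimpleGraph V} {u v : V} (p : G.Walk u v) {i : ℕ}
    (h : i ≤ p.length) :
    p.getVert i = p.support[i]'(by rw [SimpleGraph.Walk.length_support]; omega) := by
  induction p generalizing i with
  | nil => simp only [SimpleGraph.Walk.length_nil, Nat.le_zero] at h; subst h; simp [SimpleGraph.Walk.getVert]
  | cons ha q ih =>
      cases i with
      | zero => simp [SimpleGraph.Walk.getVert]
      | succ n =>
          simp only [SimpleGraph.Walk.getVert, SimpleGraph.Walk.support_cons]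
          rw [ih (by simpa using h)]
          simp

lemma cycle_getVert_inj {G : SimpleGraph V} {v : V} {c : G.Walk v v} (hc : c.IsCycle)
    {s t : ℕ} (hs : s < c.length) (ht : t < c.length) (h : c.getVert s = c.getVert t) :
    s = t := by
  have hnd : c.support.tail.Nodup := hc.support_nodup
  have hlen : c.support.length = c.length + 1 := c.length_support
  have htail : c.support = v :: c.support.tail := by simpa using c.support_eq_cons
  have hlt : c.support.tail.length = c.length := by
    rw [htail] at hlen; simpa using hlen
  have hget : ∀ (i : ℕ) (hi : i - 1 < c.support.tail.length), 1 ≤ i → i ≤ c.length →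
      c.getVert i = c.support.tail[i-1]'hi := by
    intro i hi h1 h2
    rw [getVert_eq_support_getElem c h2, List.getElem_eq_iff]
    conv_lhs => rw [htail]
    rcases Nat.exists_eq_add_of_le h1 with ⟨j, rfl⟩
    simp [Nat.add_comm 1 j]
  by_contra hne
  wlog hlt' : s < t generalizing s t
  · exact this ht hs h.symm (Ne.symm hne) (by omega)
  rcases Nat.eq_zero_or_pos s with rfl | hs1
  · have h0 : v = c.support.tail[c.length - 1]'(by omega) := by
      conv_lhs => rw [← c.getVert_length]
      exact hget _ _ (by omega) le_rfl
    rw [c.getVert_zero] at h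
    rw [hget t (by omega) (by omega) (by omega)] at h
    have := (List.Nodup.getElem_inj_iff hnd).mp (h0.symm.trans h)
    omega
  · rw [hget s (by omega) hs1 (by omega), hget t (by omega) (by omega) (by omega)] at h
    have := (List.Nodup.getElem_inj_iff hnd).mp h
    omega

lemma support_subset_of_path {T : SimpleGraph I} (hT : T.IsAcyclic) {s : Set I}
    (hconn : (T.induce s).Connected) {i j : I} (hi : i ∈ s) (hj : j ∈ s)
    (p : T.Walk i j) (hp : p.IsPath) : ∀ l ∈ p.support, l ∈ s := by
  classical
  obtain ⟨q⟩ := hconn ⟨i, hi⟩ ⟨j, hj⟩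
  let q' : T.Walk i j := q.map (SimpleGraph.Embedding.induce s).toHom
  have hsup : ∀ l ∈ q'.support, l ∈ s := by
    intro l hl
    rw [show q'.support = q.support.map _ from SimpleGraph.Walk.support_map _ _] at hl
    obtain ⟨⟨x, hx⟩, _, rfl⟩ := List.mem_map.mp hl
    exact hx
  have hq'path : q'.toPath.1.support ⊆ q'.support := q'.support_toPath_subset
  have : p = q'.toPath.1 := congrArg Subtype.val (hT.path_unique ⟨p, hp⟩ q'.toPath)
  intro l hl
  rw [this] at hl
  exact hsup l (hq'path hl)

lemma walk_eq_of_length_zero {G : SimpleGraph V} {u v : V} (p : G.Walk u v)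
    (h : p.length = 0) : u = v := by
  cases p with
  | nil => rfl
  | cons h' q => simp at h

lemma acyclic_of_td [Fintype I]
    (S : SimpleGraph V) (T : SimpleGraph I) (B : I → Finset V)
    (hT : T.IsTree)
    (hedge : ∀ u v : V, S.Adj u v → ∃ i, u ∈ B i ∧ v ∈ B i)
    (hsub : ∀ v : V, (T.induce {i : I | v ∈ B i}).Connected)
    (hcard : ∀ i, (B i).card ≤ 2) : S.IsAcyclic := by
  classical
  intro v c hc
  obtain ⟨k, hk⟩ : ∃ k : ℕ, c.length = k := ⟨c.length, rfl⟩
  have hk3 : 3 ≤ k := hk ▸ hc.three_le_length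
  set W : ℕ → V := fun t => c.getVert t with hW
  have hW0 : W k = W 0 := by
    show c.getVert k = c.getVert 0
    rw [← hk, c.getVert_length, c.getVert_zero]
  have hadj : ∀ t, t < k → S.Adj (W t) (W (t+1)) :=
    fun t ht => c.adj_getVert_succ (by omega)
  have hinj : ∀ s t, s < k → t < k → W s = W t → s = t :=
    fun s t hs ht h => cycle_getVert_inj hc (by omega) (by omega) h
  set pred : (ℕ → I) → Prop := fun f => ∀ t, t < k → W t ∈ B (f t) ∧ W (t+1) ∈ B (f t)
    with hpreddef
  set L : (ℕ → I) → ℕ := fun f => ∑ t ∈ range k, T.dist (f t) (f ((t+1) % k)) with hLdef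
  -- the set of achievable values is nonempty
  have hex : ∃ f, pred f := by
    have hch : ∀ t : ℕ, ∃ i : I, t < k → (W t ∈ B i ∧ W (t+1) ∈ B i) := by
      intro t
      by_cases ht : t < k
      · obtain ⟨i, hi⟩ := hedge _ _ (hadj t ht)
        exact ⟨i, fun _ => hi⟩
      · obtain ⟨i, hi⟩ := hedge _ _ (hadj 0 (by omega))
        exact ⟨i, fun h => absurd h ht⟩
    choose f0 hf0 using hch
    exact ⟨f0, fun t ht => hf0 t ht⟩
  obtain ⟨f1, hf1⟩ := hex
  have hSne : {n | ∃ f, pred f ∧ L f = n}.Nonempty := ⟨L f1, f1, hf1, rfl⟩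
  obtain ⟨f, hf, hLf⟩ : ∃ f, pred f ∧ L f = sInf {n | ∃ f, pred f ∧ L f = n} :=
    Nat.sInf_mem hSne
  -- bags are exactly edges
  have hBag : ∀ t, t < k → ∀ x, x ∈ B (f t) → x = W t ∨ x = W (t+1) := by
    intro t ht x hx
    have hpair : ({W t, W (t+1)} : Finset V) ⊆ B (f t) := by
      intro y hy
      rcases Finset.mem_insert.mp hy with rfl | hy
      · exact (hf t ht).1
      · rw [Finset.mem_singleton] at hy; subst hy; exact (hf t ht).2
    have hne : W t ≠ W (t+1) := (hadj t ht).ne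
    have hcard2 : ({W t, W (t+1)} : Finset V).card = 2 := Finset.card_pair hne
    have heq : ({W t, W (t+1)} : Finset V) = B (f t) :=
      Finset.eq_of_subset_of_card_le hpair (by rw [hcard2]; exact hcard _)
    rw [← heq] at hx
    simpa using hx
  -- distinctness of consecutive bags
  have hfne1 : ∀ t, t + 1 ≤ k - 1 → f t ≠ f (t+1) := by
    intro t ht heq
    have h1 : W t ∈ B (f (t+1)) := heq ▸ (hf t (by omega)).1
    rcases hBag (t+1) (by omega) _ h1 with h | h
    · exact absurd (hinj t (t+1) (by omega) (by omega) h) (by omega)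
    · by_cases h2 : t + 2 < k
      · exact absurd (hinj t (t+2) (by omega) h2 h) (by omega)
      · have ht2 : t + 2 = k := by omega
        rw [ht2, hW0] at h
        exact absurd (hinj t 0 (by omega) (by omega) h) (by omega)
  have hfne0 : f (k-1) ≠ f 0 := by
    intro heq
    have h1 : W 1 ∈ B (f (k-1)) := heq ▸ (hf 0 (by omega)).2
    rcases hBag (k-1) (by omega) _ h1 with h | h
    · exact absurd (hinj 1 (k-1) (by omega) (by omega) h) (by omega)
    · rw [(by omega : k - 1 + 1 = k), hW0] at h
      exact absurd (hinj 1 0 (by omega) (by omega) h) (by omega)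
  -- shortest paths between consecutive bags
  have hPex : ∀ t : ℕ, ∃ p : T.Walk (f t) (f (t+1)), p.IsPath ∧
      p.length = T.dist (f t) (f (t+1)) := fun t => hT.isConnected.exists_path_of_dist _ _
  choose P hPpath hPlen using hPex
  obtain ⟨Q, hQpath, hQlen⟩ := hT.isConnected.exists_path_of_dist (f (k-1)) (f 0)
  -- supports of these paths lie in subtrees
  have hPsup : ∀ t, t + 1 < k → ∀ l ∈ (P t).support, W (t+1) ∈ B l := by
    intro t ht
    exact support_subset_of_path hT.IsAcyclic (hsub (W (t+1)))
      (show f t ∈ {i : I | W (t+1) ∈ B i} from (hf t (by omega)).2)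
      (show f (t+1) ∈ {i : I | W (t+1) ∈ B i} from (hf (t+1) ht).1)
      (P t) (hPpath t)
  have hQsup : ∀ l ∈ Q.support, W 0 ∈ B l := by
    have h1 : W 0 ∈ B (f (k-1)) := by
      have := (hf (k-1) (by omega)).2
      rwa [(by omega : k - 1 + 1 = k), hW0] at this
    exact support_subset_of_path hT.IsAcyclic (hsub (W 0)) h1 (hf 0 (by omega)).1 Q hQpath
  -- P 0 and Q are non-nil
  have hP0len : (P 0).length ≠ 0 := fun h => hfne1 0 (by omega) (walk_eq_of_length_zero _ h)
  have hP0nil : ¬ (P 0).Nil := by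
    rw [SimpleGraph.Walk.nil_iff_length_eq]; exact hP0len
  have hQlen0 : Q.length ≠ 0 := fun h => hfne0 (walk_eq_of_length_zero _ h)
  set Qr := Q.reverse with hQrdef
  have hQrpath : Qr.IsPath := hQpath.reverse
  have hQrlen : Qr.length = Q.length := SimpleGraph.Walk.length_reverse _
  have hQrnil : ¬ Qr.Nil := by
    rw [SimpleGraph.Walk.nil_iff_length_eq, hQrlen]; exact hQlen0
  set a := (P 0).getVert 1 with ha
  set b := Qr.getVert 1 with hb
  have hadja : T.Adj (f 0) a := (P 0).adj_snd hP0nil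
  have hadjb : T.Adj (f 0) b := Qr.adj_snd hQrnil
  have hWa : W 1 ∈ B a := by
    apply hPsup 0 (by omega)
    rw [SimpleGraph.Walk.mem_support_iff_exists_getVert]
    exact ⟨1, rfl, by omega⟩
  have hWb : W 0 ∈ B b := by
    apply hQsup
    have hbQ : b ∈ Qr.support := by
      rw [SimpleGraph.Walk.mem_support_iff_exists_getVert]
      exact ⟨1, rfl, by omega⟩
    rw [hQrdef, SimpleGraph.Walk.support_reverse, List.mem_reverse] at hbQ
    exact hbQ
  -- tails
  set q0 := (P 0).tail with hq0def
  have hq0len : q0.length + 1 = (P 0).length := SimpleGraph.Walk.length_tail_add_one hP0nil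
  have hq0sup : f 0 ∉ q0.support := by
    have hns := (P 0).cons_support_tail hP0nil
    have hnd : ((P 0).support).Nodup := (hPpath 0).support_nodup
    rw [← hns] at hnd
    exact (List.nodup_cons.mp hnd).1
  set qb := Qr.tail with hqbdef
  have hqblen : qb.length + 1 = Qr.length := SimpleGraph.Walk.length_tail_add_one hQrnil
  have hqbsup : f 0 ∉ qb.support := by
    have hns := Qr.cons_support_tail hQrnil
    have hnd : (Qr.support).Nodup := hQrpath.support_nodup
    rw [← hns] at hnd
    exact (List.nodup_cons.mp hnd).1
  -- middle walk avoiding f 0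
  have hmid : ∀ n, 1 ≤ n → n ≤ k - 1 → ∃ M : T.Walk (f 1) (f n), f 0 ∉ M.support := by
    intro n
    induction n with
    | zero => omega
    | succ n ih =>
      intro h1 h2
      rcases Nat.eq_zero_or_pos n with rfl | hn
      · refine ⟨SimpleGraph.Walk.nil, ?_⟩
        simp only [SimpleGraph.Walk.support_nil, List.mem_singleton]
        exact fun h => hfne1 0 (by omega) h
      · obtain ⟨M, hM⟩ := ih hn (by omega)
        refine ⟨M.append (P n), ?_⟩
        rw [SimpleGraph.Walk.mem_support_append_iff]
        rintro (h | h)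
        · exact hM h
        · have hmem := hPsup n (by omega) _ h
          rcases hBag 0 (by omega) _ hmem with h' | h'
          · exact absurd (hinj (n+1) 0 (by omega) (by omega) h') (by omega)
          · exact absurd (hinj (n+1) 1 (by omega) (by omega) h') (by omega)
  obtain ⟨M, hMsup⟩ := hmid (k-1) (by omega) le_rfl
  -- the full walk from a to b avoiding f 0
  set N : T.Walk a b := q0.append (M.append qb.reverse) with hNdef
  have hNsup : f 0 ∉ N.support := by
    rw [hNdef, SimpleGraph.Walk.mem_support_append_iff,
      SimpleGraph.Walk.mem_support_append_iff]
    rintro (h | h | h)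
    · exact hq0sup h
    · exact hMsup h
    · rw [SimpleGraph.Walk.support_reverse, List.mem_reverse] at h
      exact hqbsup h
  -- a = b
  have hab : a = b := by
    by_contra hab
    have haf0 : a ≠ f 0 := fun h => T.irrefl (h ▸ hadja)
    have hbf0 : b ≠ f 0 := fun h => T.irrefl (h ▸ hadjb)
    have hP2 : (SimpleGraph.Walk.cons hadja.symm
        (SimpleGraph.Walk.cons hadjb SimpleGraph.Walk.nil)).IsPath := by
      rw [SimpleGraph.Walk.isPath_def]
      simp [haf0, hbf0, hab, Ne.symm hbf0]
    have heq := hT.IsAcyclic.path_unique N.toPath ⟨_, hP2⟩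
    have hmem : f 0 ∈ (N.toPath : T.Walk a b).support := by
      rw [heq]; simp
    exact hNsup (N.support_toPath_subset hmem)
  -- distance improvements
  have hdista : T.dist a (f 1) + 1 ≤ T.dist (f 0) (f 1) := by
    have h1 : T.dist a (f 1) ≤ q0.length := SimpleGraph.dist_le q0
    have h2 : (P 0).length = T.dist (f 0) (f 1) := hPlen 0
    omega
  have hdistb : T.dist (f (k-1)) a + 1 ≤ T.dist (f (k-1)) (f 0) := by
    have h1 : T.dist b (f (k-1)) ≤ qb.length := SimpleGraph.dist_le qb
    rw [hab]
    rw [SimpleGraph.dist_comm]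
    omega
  -- the improved assignment
  set f' : ℕ → I := Function.update f 0 a with hf'def
  have hf'0 : f' 0 = a := Function.update_self 0 a f
  have hf'ne : ∀ t, t ≠ 0 → f' t = f t := fun t ht => Function.update_of_ne ht a f
  have hpred' : pred f' := by
    intro t ht
    by_cases h0 : t = 0
    · subst h0
      rw [hf'0]
      exact ⟨hab ▸ hWb, hWa⟩
    · rw [hf'ne t h0]
      exact hf t ht
  have hstrict : L f' < L f := by
    show ∑ t ∈ range k, T.dist (f' t) (f' ((t+1) % k)) <
      ∑ t ∈ range k, T.dist (f t) (f ((t+1) % k))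
    apply Finset.sum_lt_sum
    · intro i hi
      rw [Finset.mem_range] at hi
      by_cases h0 : i = 0
      · subst h0
        have e1 : (0+1) % k = 1 := Nat.mod_eq_of_lt (by omega)
        have e2 : f' 1 = f 1 := hf'ne 1 (by omega)
        rw [hf'0, e1, e2]
        omega
      · by_cases hk1 : i = k - 1
        · subst hk1
          have e0 : k - 1 + 1 = k := by omega
          have e1 : (k-1+1) % k = 0 := by rw [e0, Nat.mod_self]
          have e2 : f' (k-1) = f (k-1) := hf'ne (k-1) (by omega)
          rw [e1, hf'0, e2]
          omega
        · have e1 : (i+1) % k = i+1 := Nat.mod_eq_of_lt (by omega)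
          have e2 : f' i = f i := hf'ne i h0
          have e3 : f' (i+1) = f (i+1) := hf'ne (i+1) (by omega)
          rw [e1, e2, e3]
    · refine ⟨0, Finset.mem_range.mpr (by omega), ?_⟩
      have e1 : (0+1) % k = 1 := Nat.mod_eq_of_lt (by omega)
      have e2 : f' 1 = f 1 := hf'ne 1 (by omega)
      rw [hf'0, e1, e2]
      omega
  have hle : sInf {n | ∃ f, pred f ∧ L f = n} ≤ L f' := Nat.sInf_le ⟨f', hpred', rfl⟩
  omega

lemma even_offdiag_sum [DecidableEq V] (m : V → V → ℕ) (hsym : ∀ u v, m u v = m v u)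
    (A : Finset V) : Even (∑ a ∈ A, ∑ b ∈ A.erase a, m a b) := by
  classical
  induction A using Finset.induction_on with
  | empty => simp
  | @insert x s hx ih =>
    rw [Finset.sum_insert hx, Finset.erase_insert hx]
    have h2 : ∀ a ∈ s, ∑ b ∈ (insert x s).erase a, m a b = m a x + ∑ b ∈ s.erase a, m a b := by
      intro a ha
      have hax : a ≠ x := fun h => hx (h ▸ ha)
      rw [Finset.erase_insert_of_ne hax.symm,
        Finset.sum_insert (fun h => hx (Finset.mem_of_mem_erase h))]
    rw [Finset.sum_congr rfl h2, Finset.sum_add_distrib]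
    have h3 : ∑ a ∈ s, m a x = ∑ a ∈ s, m x a := Finset.sum_congr rfl (fun a _ => hsym a x)
    rw [h3]
    obtain ⟨c, hc⟩ := ih
    exact ⟨(∑ b ∈ s, m x b) + c, by omega⟩

lemma mult_two_of_adj [Fintype V] [DecidableEq V]
    (m : V → V → ℕ) (hsym : ∀ u v, m u v = m v u)
    (hreg : ∀ v : V, (∑ u ∈ Finset.univ.filter (· ≠ v), m v u) + 2 * m v v = 4)
    (S : SimpleGraph V) (hS : ∀ u v, S.Adj u v ↔ u ≠ v ∧ 1 ≤ m u v)
    (hacyc : S.IsAcyclic) {u w : V} (hadj : S.Adj u w) : 2 ≤ m u w := by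
  classical
  have hbr : S.IsBridge s(u, w) := (isAcyclic_iff_forall_adj_isBridge.mp hacyc) hadj
  rw [isBridge_iff] at hbr
  have hnreach := hbr
  set G' := S \ SimpleGraph.fromEdgeSet {s(u,w)} with hG'
  set A : Finset V := Finset.univ.filter (fun a => G'.Reachable u a) with hA
  have huA : u ∈ A := by
    simp only [hA, Finset.mem_filter, Finset.mem_univ, true_and]
    exact SimpleGraph.Reachable.refl u
  have hwA : w ∉ A := by
    simp only [hA, Finset.mem_filter, Finset.mem_univ, true_and]
    exact hnreach
  have hzero : ∀ a ∈ A, ∀ b ∈ Aᶜ, (a, b) ≠ (u, w) → m a b = 0 := by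
    intro a ha b hb hne
    rw [Finset.mem_compl] at hb
    by_contra h0
    have hab : a ≠ b := by
      rintro rfl; exact hb ha
    have hSab : S.Adj a b := (hS a b).mpr ⟨hab, by omega⟩
    by_cases he : s(a, b) = s(u, w)
    · rw [Sym2.eq_iff] at he
      rcases he with ⟨rfl, rfl⟩ | ⟨rfl, rfl⟩
      · exact hne rfl
      · exact hb huA
    · have hG'ab : G'.Adj a b := by
        rw [hG', SimpleGraph.sdiff_adj]
        refine ⟨hSab, ?_⟩
        rw [SimpleGraph.fromEdgeSet_adj]
        rintro ⟨hmem, -⟩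
        exact he (by simpa using hmem)
      have haR : G'.Reachable u a := by
        rw [hA] at ha; simpa using ha
      have : G'.Reachable u b := haR.trans hG'ab.reachable
      apply hb
      rw [hA]; simpa using this
  -- cross sum equals m u w
  have hcross : ∑ a ∈ A, ∑ b ∈ Aᶜ, m a b = m u w := by
    rw [← Finset.sum_product']
    refine Finset.sum_eq_single_of_mem (u, w) ?_ ?_
    · rw [Finset.mem_product]
      exact ⟨huA, Finset.mem_compl.mpr hwA⟩
    · rintro ⟨a, b⟩ hmem hne
      rw [Finset.mem_product] at hmem
      exact hzero a hmem.1 b hmem.2 hne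
  -- parity
  have h1 : ∀ a : V, (∑ b ∈ Finset.univ, m a b) + m a a = 4 := by
    intro a
    have hr := hreg a
    have hsplit : ∑ b ∈ Finset.univ, m a b
        = (∑ b ∈ Finset.univ.filter (· ≠ a), m a b) + m a a := by
      rw [← Finset.sum_filter_add_sum_filter_not Finset.univ (· ≠ a) (m a)]
      congr 1
      have : Finset.univ.filter (fun b => ¬ b ≠ a) = {a} := by
        ext b; simp [eq_comm]
      rw [this, Finset.sum_singleton]
    omega
  have h4A : ∑ a ∈ A, ((∑ b ∈ Finset.univ, m a b) + m a a) = 4 * A.card := by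
    rw [Finset.sum_congr rfl (fun a _ => h1 a), Finset.sum_const, smul_eq_mul, Nat.mul_comm]
  have hsplitA : ∀ a : V, ∑ b ∈ Finset.univ, m a b
      = (∑ b ∈ A, m a b) + ∑ b ∈ Aᶜ, m a b := by
    intro a
    rw [Finset.sum_add_sum_compl]
  have hT2 : ∑ a ∈ A, ∑ b ∈ A, m a b
      = (∑ a ∈ A, ∑ b ∈ A.erase a, m a b) + ∑ a ∈ A, m a a := by
    rw [← Finset.sum_add_distrib]
    refine Finset.sum_congr rfl ?_
    intro a ha
    rw [Finset.sum_erase_add A _ ha]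
  have hkey : 4 * A.card
      = ((∑ a ∈ A, ∑ b ∈ A.erase a, m a b) + 2 * (∑ a ∈ A, m a a)) + m u w := by
    rw [← h4A, ← hcross]
    rw [Finset.sum_congr rfl (fun a (_ : a ∈ A) => by rw [hsplitA a])]
    rw [Finset.sum_add_distrib, Finset.sum_add_distrib, hT2]
    ring
  obtain ⟨c, hc⟩ := even_offdiag_sum m hsym A
  have hmuw1 : 1 ≤ m u w := ((hS u w).mp hadj).2
  omega

lemma degree_le_two [Fintype V] [DecidableEq V]
    (m : V → V → ℕ) (hsym : ∀ u v, m u v = m v u)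
    (hreg : ∀ v : V, (∑ u ∈ Finset.univ.filter (· ≠ v), m v u) + 2 * m v v = 4)
    (S : SimpleGraph V) [DecidableRel S.Adj]
    (hS : ∀ u v, S.Adj u v ↔ u ≠ v ∧ 1 ≤ m u v)
    (hacyc : S.IsAcyclic) (v : V) : S.degree v ≤ 2 := by
  classical
  have h2 : ∀ u ∈ S.neighborFinset v, 2 ≤ m v u := by
    intro u hu
    exact mult_two_of_adj m hsym hreg S hS hacyc ((SimpleGraph.mem_neighborFinset _ _ _).mp hu)
  have hsum : (S.neighborFinset v).card * 2 ≤ ∑ u ∈ S.neighborFinset v, m v u := by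
    have h := Finset.card_nsmul_le_sum (S.neighborFinset v) (m v) 2 h2
    rwa [smul_eq_mul] at h
  have hdeg : S.degree v = (S.neighborFinset v).card := rfl
  have hsub : S.neighborFinset v ⊆ Finset.univ.filter (· ≠ v) := by
    intro u hu
    rw [SimpleGraph.mem_neighborFinset] at hu
    simp [Ne.symm hu.ne]
  have hle : ∑ u ∈ S.neighborFinset v, m v u ≤ ∑ u ∈ Finset.univ.filter (· ≠ v), m v u :=
    Finset.sum_le_sum_of_subset hsub
  have := hreg v
  omega


lemma walk_eq_of_length_zero' {G : SimpleGraph V} {u v : V} (p : G.Walk u v)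
    (h : p.length = 0) : u = v := by
  cases p with
  | nil => rfl
  | cons h' q => simp at h

def walkToInduce {G : SimpleGraph V} {s : Set V} :
    ∀ {a b : V} (p : G.Walk a b) (hsup : ∀ x ∈ p.support, x ∈ s),
      (G.induce s).Walk ⟨a, hsup a p.start_mem_support⟩ ⟨b, hsup b p.end_mem_support⟩
  | _, _, SimpleGraph.Walk.nil, _ => SimpleGraph.Walk.nil
  | _, _, SimpleGraph.Walk.cons h q, hsup =>
      SimpleGraph.Walk.cons (by exact h)
        (walkToInduce q (fun x hx => hsup x (by simp [hx])))

lemma iso_path_of_leaf : ∀ (n : ℕ) (V : Type u) [Fintype V] [DecidableEq V]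
    (S : SimpleGraph V) [DecidableRel S.Adj],
    Fintype.card V = n → S.Connected → (∀ v, S.degree v ≤ 2) →
    ∀ x : V, S.degree x ≤ 1 →
    ∃ g : S ≃g SimpleGraph.pathGraph n, (g x : ℕ) = 0 := by
  intro n
  induction n with
  | zero =>
    intro V _ _ S _ hcard hconn _ x _
    rw [Fintype.card_eq_zero_iff] at hcard
    exact (hcard.false x).elim
  | succ n ih =>
    intro V _ _ S _ hcard hconn hdeg x hx
    rcases Nat.eq_zero_or_pos n with rfl | hn
    · -- single vertex
      have hone : ∀ u v : V, u = v := fun u v =>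
        Fintype.card_le_one_iff.mp (by omega) u v
      refine ⟨⟨Fintype.equivFinOfCardEq hcard, ?_⟩, ?_⟩
      · intro u v
        have huv := hone u v
        subst huv
        constructor
        · intro h
          exact absurd h (SimpleGraph.irrefl _)
        · intro h
          exact absurd h (SimpleGraph.irrefl _)
      · have := (Fintype.equivFinOfCardEq hcard x).isLt
        omega
    · -- n ≥ 1, so card V ≥ 2
      obtain ⟨y0, hy0⟩ := Fintype.exists_ne_of_one_lt_card (by omega) x
      have hdx1 : S.degree x = 1 := by
        have hpos : 0 < S.degree x := by
          rw [SimpleGraph.degree_pos_iff_exists_adj]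
          obtain ⟨p⟩ := hconn x y0
          have hnil : ¬ p.Nil := by
            rw [SimpleGraph.Walk.nil_iff_length_eq]
            exact fun h => hy0 (walk_eq_of_length_zero' p h).symm
          exact ⟨p.getVert 1, p.adj_snd hnil⟩
        omega
      obtain ⟨y, hy⟩ := Finset.card_eq_one.mp (hdx1 ▸ rfl :
        (S.neighborFinset x).card = 1)
      have hxy : S.Adj x y := by
        rw [← SimpleGraph.mem_neighborFinset, hy]; exact Finset.mem_singleton_self y
      have hnbr : ∀ z, S.Adj x z ↔ z = y := by
        intro z
        rw [← SimpleGraph.mem_neighborFinset, hy, Finset.mem_singleton]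
      have hyx : y ≠ x := (S.ne_of_adj hxy).symm
      -- no path between non-x vertices passes through x
      have hxnot : ∀ (v : V), v ≠ x → ∀ (p : S.Walk v y), p.IsPath → x ∉ p.support := by
        intro v hv p hp hxs
        have hxv : x ≠ v := fun h => hv h.symm
        have hxyne : x ≠ y := S.ne_of_adj hxy
        set q := p.dropUntil x hxs with hq
        set r := (p.takeUntil x hxs).reverse with hr
        have hqpath : q.IsPath := hp.dropUntil hxs
        have hrpath : r.IsPath := (hp.takeUntil hxs).reverse
        have hqnil : ¬ q.Nil := by
          rw [SimpleGraph.Walk.nil_iff_length_eq]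
          exact fun h => hxyne (walk_eq_of_length_zero' q h)
        have hrnil : ¬ r.Nil := by
          rw [SimpleGraph.Walk.nil_iff_length_eq, SimpleGraph.Walk.length_reverse]
          exact fun h => hxv ((walk_eq_of_length_zero' _ h).symm)
        -- second vertex of r is a neighbor of x, hence y
        have hradj : S.Adj x (r.getVert 1) := r.adj_snd hrnil
        have hry : r.getVert 1 = y := (hnbr _).mp hradj
        have hymem : y ∈ (p.takeUntil x hxs).support := by
          have : r.getVert 1 ∈ r.support := by
            rw [SimpleGraph.Walk.mem_support_iff_exists_getVert]
            refine ⟨1, rfl, ?_⟩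
            rw [SimpleGraph.Walk.not_nil_iff_lt_length] at hrnil
            omega
          rw [hry] at this
          rw [hr, SimpleGraph.Walk.support_reverse, List.mem_reverse] at this
          exact this
        have hymem2 : y ∈ q.support.tail := by
          have hyq : y ∈ q.support := q.end_mem_support
          have : q.support = x :: q.support.tail := by
            have := q.support_eq_cons
            simpa using this
          rw [this] at hyq
          rcases List.mem_cons.mp hyq with h | h
          · exact absurd h.symm hxyne
          · exact h
        have hnd := hp.support_nodup
        rw [← p.take_spec hxs, SimpleGraph.Walk.support_append] at hnd
        exact (List.disjoint_of_nodup_append hnd) hymem hymem2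
      -- the induced graph on V \ {x}
      set s : Set V := {v : V | v ≠ x} with hs
      set S' : SimpleGraph ↥s := S.induce s with hS'
      haveI : DecidableRel S'.Adj := fun a b => ‹DecidableRel S.Adj› a.1 b.1
      have hys : y ∈ s := hyx
      -- connectivity of S'
      have hreach : ∀ v : ↥s, S'.Reachable v ⟨y, hys⟩ := by
        rintro ⟨v, hv⟩
        obtain ⟨p, hp, -⟩ := hconn.exists_path_of_dist v y
        have hxp : x ∉ p.support := hxnot v hv p hp
        have hsup : ∀ z ∈ p.support, z ∈ s := fun z hz => fun h => hxp (h ▸ hz)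
        exact ⟨walkToInduce p hsup⟩
      have hconn' : S'.Connected := by
        rw [SimpleGraph.connected_iff]
        refine ⟨fun a b => (hreach a).trans (hreach b).symm, ⟨⟨y, hys⟩⟩⟩
      -- degrees in S'
      have hdegle : ∀ v : ↥s, S'.degree v ≤ S.degree v.1 := by
        intro v
        apply Finset.card_le_card_of_injOn Subtype.val
        · intro z hz
          rw [Finset.mem_coe, SimpleGraph.mem_neighborFinset] at hz ⊢
          exact hz
        · exact fun a _ b _ h => Subtype.ext h
      have hdegy : S'.degree ⟨y, hys⟩ ≤ 1 := by
        have hsub : (S'.neighborFinset ⟨y, hys⟩).image Subtype.val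
            ⊆ (S.neighborFinset y).erase x := by
          intro z hz
          rw [Finset.mem_image] at hz
          obtain ⟨⟨z', hz'⟩, hmem, rfl⟩ := hz
          rw [SimpleGraph.mem_neighborFinset] at hmem
          rw [Finset.mem_erase, SimpleGraph.mem_neighborFinset]
          exact ⟨hz', hmem⟩
        have hcard1 : (S'.neighborFinset ⟨y, hys⟩).card
            = ((S'.neighborFinset ⟨y, hys⟩).image Subtype.val).card :=
          (Finset.card_image_of_injective _ Subtype.val_injective).symm
        have hcard2 : ((S.neighborFinset y).erase x).card = S.degree y - 1 := by
          rw [Finset.card_erase_of_mem]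
          · rfl
          · rw [SimpleGraph.mem_neighborFinset]; exact hxy.symm
        have := Finset.card_le_card hsub
        have hdy := hdeg y
        unfold SimpleGraph.degree at *
        omega
      -- cardinality
      have hcs : Fintype.card ↥s = n := by
        have h1 : Fintype.card ↥s = Fintype.card {v : V // v ≠ x} :=
          Fintype.card_congr (Equiv.refl _)
        rw [h1, Fintype.card_subtype_compl, hcard, Fintype.card_subtype_eq]
        omega
      obtain ⟨g', hg'⟩ := ih ↥s S' hcs hconn' (fun v => le_trans (hdegle v) (hdeg v.1))
        ⟨y, hys⟩ hdegy
      -- build the equivalence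
      refine ⟨⟨{ toFun := fun v => if h : v = x then 0 else Fin.succ (g' ⟨v, h⟩)
                 invFun := fun i => Fin.cases x (fun j => ((g'.symm j : ↥s) : V)) i
                 left_inv := ?_
                 right_inv := ?_ }, ?_⟩, ?_⟩
      · intro v
        by_cases h : v = x
        · subst h; simp
        · simp only [dif_neg h, Fin.cases_succ]
          exact congrArg Subtype.val (g'.symm_apply_apply ⟨v, h⟩)
      · intro i
        induction i using Fin.cases with
        | zero => simp
        | succ j =>
          simp only [Fin.cases_succ]
          have hne : ((g'.symm j : ↥s) : V) ≠ x := (g'.symm j).2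
          refine (dif_neg hne).trans ?_
          have : (⟨((g'.symm j : ↥s) : V), hne⟩ : ↥s) = g'.symm j := Subtype.ext rfl
          rw [this, g'.apply_symm_apply]
      · intro u v
        simp only [Equiv.coe_fn_mk]
        by_cases hu : u = x <;> by_cases hv : v = x
        · subst hu; subst hv
          rw [dif_pos rfl]
          constructor
          · intro h; exact absurd h (SimpleGraph.irrefl _)
          · intro h; exact absurd h (SimpleGraph.irrefl _)
        · subst hu
          rw [dif_pos rfl, dif_neg hv]
          rw [SimpleGraph.pathGraph_adj]
          have h0 : ((0 : Fin (n+1)) : ℕ) = 0 := rfl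
          rw [h0]
          simp only [Fin.val_succ]
          constructor
          · rintro (h | h)
            · -- g' ⟨v,hv⟩ = 0, so v = y
              have hval : (g' ⟨v, hv⟩ : ℕ) = 0 := by omega
              have : g' ⟨v, hv⟩ = g' ⟨y, hys⟩ := Fin.ext (by rw [hg']; exact hval)
              have := g'.injective this
              rw [hnbr]
              exact congrArg Subtype.val this
            · omega
          · intro h
            left
            have hvy : v = y := by rwa [hnbr] at h
            subst hvy
            have : g' ⟨v, hv⟩ = g' ⟨v, hys⟩ := rfl
            rw [this, hg']
        · subst hv
          rw [dif_pos rfl, dif_neg hu]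
          rw [SimpleGraph.pathGraph_adj]
          have h0 : ((0 : Fin (n+1)) : ℕ) = 0 := rfl
          rw [h0]
          simp only [Fin.val_succ]
          constructor
          · rintro (h | h)
            · omega
            · have hval : (g' ⟨u, hu⟩ : ℕ) = 0 := by omega
              have : g' ⟨u, hu⟩ = g' ⟨y, hys⟩ := Fin.ext (by rw [hg']; exact hval)
              have := g'.injective this
              rw [S.adj_comm, hnbr]
              exact congrArg Subtype.val this
          · intro h
            right
            have huy : u = y := by rwa [S.adj_comm, hnbr] at h
            subst huy
            have : g' ⟨u, hu⟩ = g' ⟨u, hys⟩ := rfl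
            rw [this, hg']
        · rw [dif_neg hu, dif_neg hv]
          have hstep : (SimpleGraph.pathGraph (n+1)).Adj (Fin.succ (g' ⟨u, hu⟩))
              (Fin.succ (g' ⟨v, hv⟩)) ↔
              (SimpleGraph.pathGraph n).Adj (g' ⟨u, hu⟩) (g' ⟨v, hv⟩) := by
            rw [SimpleGraph.pathGraph_adj, SimpleGraph.pathGraph_adj]
            simp only [Fin.val_succ]
            omega
          rw [hstep, g'.map_rel_iff]
          exact Iff.rfl
      · simp only [RelIso.coe_fn_mk, Equiv.coe_fn_mk, dif_pos]
        rfl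

end Stmt5Helpers

/-- Let `G` be a connected 4-regular multigraph on a finite
vertex set `V` (given by a symmetric multiplicity function `m`; degree of `v`
is `(∑ u ≠ v, m v u) + 2 * m v v`; `G` is connected iff its simplification `S`
is connected), and suppose `S` admits a tree decomposition of width at most 1:
a tree `T` on a finite index type `I` together with bags `B i ⊆ V` such that
every vertex lies in some bag, every edge of `S` is contained in some bag,
for each vertex `v` the set of bags containing `v` spans a connected subtree
of `T`, and every bag has at most 2 elements. Then `S` is a path, i.e. `S` is
isomorphic to the path graph on `|V|` vertices. -/
theorem stmt5 {V : Type*} [Fintype V] [DecidableEq V]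
    (m : V → V → ℕ) (hsym : ∀ u v, m u v = m v u)
    (hreg : ∀ v : V, (∑ u ∈ Finset.univ.filter (· ≠ v), m v u) + 2 * m v v = 4)
    (S : SimpleGraph V) (hS : ∀ u v, S.Adj u v ↔ u ≠ v ∧ 1 ≤ m u v)
    (hconn : S.Connected)
    (htd : ∃ (I : Type) (_ : Fintype I) (T : SimpleGraph I) (B : I → Finset V),
      T.IsTree ∧
      (∀ v : V, ∃ i : I, v ∈ B i) ∧
      (∀ u v : V, S.Adj u v → ∃ i : I, u ∈ B i ∧ v ∈ B i) ∧
      (∀ v : V, (T.induce {i : I | v ∈ B i}).Connected) ∧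
      (∀ i : I, (B i).card ≤ 2)) :
    Nonempty (S ≃g SimpleGraph.pathGraph (Fintype.card V)) := by
  classical
  obtain ⟨I, _, T, B, hT, hcover, hedge, hsub, hcard2⟩ := htd
  haveI : DecidableRel S.Adj := fun u v => decidable_of_iff _ (hS u v).symm
  have hacyc : S.IsAcyclic := acyclic_of_td S T B hT hedge hsub hcard2
  have hdeg : ∀ v, S.degree v ≤ 2 := fun v => degree_le_two m hsym hreg S hS hacyc v
  have htree : S.IsTree := ⟨hconn, hacyc⟩
  have hedges : S.edgeFinset.card + 1 = Fintype.card V := htree.card_edgeFinset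
  have hsumdeg : ∑ v : V, S.degree v = 2 * S.edgeFinset.card :=
    SimpleGraph.sum_degrees_eq_twice_card_edges S
  have hleaf : ∃ x : V, S.degree x ≤ 1 := by
    by_contra h
    push_neg at h
    have h2 : 2 * Fintype.card V ≤ ∑ v : V, S.degree v := by
      calc 2 * Fintype.card V = ∑ _v : V, 2 := by
            rw [Finset.sum_const, Finset.card_univ, smul_eq_mul, Nat.mul_comm]
        _ ≤ ∑ v : V, S.degree v := Finset.sum_le_sum (fun v _ => h v)
    omega
  obtain ⟨x, hx⟩ := hleaf
  obtain ⟨g, -⟩ := iso_path_of_leaf (Fintype.card V) V S rfl hconn hdeg x hx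
  exact ⟨g⟩
end

section
/- For every finite simple graph G, the pathwidth of G is at most the cutwidth of G: pw(G) ≤ cw(G). Concretely, if G admits a vertex ordering of width w, then G admits a path decomposition of width at most w. -/
open Finset

/-- For every finite simple graph `G`, the pathwidth is at
most the cutwidth.  Concretely: if `G` (on `n = |V|` vertices) admits a vertex
ordering `e : Fin n ≃ V` of width `w`, i.e. for every `1 ≤ ℓ < n` the number
of edges `{e i, e j}` with `i < ℓ ≤ j` is at most `w`, then `G` admits a path
decomposition `B_1, …, B_k` of width at most `w`: every vertex lies in some
bag, every edge is contained in some bag, the bags containing any fixed vertex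
form an interval of consecutive indices, and every bag has at most `w + 1`
elements. -/
theorem stmt6 {V : Type*} [Fintype V] [DecidableEq V]
    (G : SimpleGraph V) [DecidableRel G.Adj]
    (n : ℕ) (hcard : Fintype.card V = n)
    (e : Fin n ≃ V) (w : ℕ)
    (hwidth : ∀ ℓ : ℕ, 1 ≤ ℓ → ℓ < n →
      (Finset.univ.filter (fun p : Fin n × Fin n =>
        (p.1 : ℕ) < ℓ ∧ ℓ ≤ (p.2 : ℕ) ∧ G.Adj (e p.1) (e p.2))).card ≤ w) :
    ∃ (k : ℕ) (B : Fin k → Finset V),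
      (∀ v : V, ∃ i : Fin k, v ∈ B i) ∧
      (∀ u v : V, G.Adj u v → ∃ i : Fin k, u ∈ B i ∧ v ∈ B i) ∧
      (∀ (v : V) (i j l : Fin k), i ≤ j → j ≤ l → v ∈ B i → v ∈ B l → v ∈ B j) ∧
      (∀ i : Fin k, (B i).card ≤ w + 1) := by
  classical
  set B : Fin n → Finset V := fun i =>
    insert (e i) ((Finset.univ.filter (fun j : Fin n =>
      (j : ℕ) < (i : ℕ) ∧ ∃ k : Fin n, (i : ℕ) ≤ (k : ℕ) ∧ G.Adj (e j) (e k))).image e)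
    with hB
  have hmem : ∀ (v : V) (i : Fin n), v ∈ B i ↔
      v = e i ∨ ((e.symm v : ℕ) < (i : ℕ) ∧
        ∃ k : Fin n, (i : ℕ) ≤ (k : ℕ) ∧ G.Adj v (e k)) := by
    intro v i
    simp only [hB, Finset.mem_insert, Finset.mem_image, Finset.mem_filter,
      Finset.mem_univ, true_and]
    constructor
    · rintro (h | ⟨j, ⟨hj, k, hk, hadj⟩, rfl⟩)
      · exact Or.inl h
      · exact Or.inr ⟨by simpa using hj, k, hk, hadj⟩
    · rintro (h | ⟨hj, k, hk, hadj⟩)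
      · exact Or.inl h
      · exact Or.inr ⟨e.symm v, ⟨hj, k, hk, by simpa using hadj⟩, by simp⟩
  refine ⟨n, B, ?_, ?_, ?_, ?_⟩
  · intro v
    exact ⟨e.symm v, by rw [hmem]; left; simp⟩
  · intro u v huv
    -- wlog via symmetry on positions
    have key : ∀ u v : V, G.Adj u v → ((e.symm u : ℕ) < (e.symm v : ℕ)) →
        ∃ i : Fin n, u ∈ B i ∧ v ∈ B i := by
      intro u v huv hlt
      refine ⟨e.symm v, ?_, ?_⟩
      · rw [hmem]
        exact Or.inr ⟨hlt, e.symm v, le_refl _, by simpa using huv⟩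
      · rw [hmem]; left; simp
    have hne : (e.symm u : ℕ) ≠ (e.symm v : ℕ) := by
      intro h
      apply G.ne_of_adj huv
      have : e.symm u = e.symm v := Fin.ext h
      simpa using congrArg e this
    rcases lt_or_gt_of_ne hne with h | h
    · exact key u v huv h
    · obtain ⟨i, h1, h2⟩ := key v u huv.symm h
      exact ⟨i, h2, h1⟩
  · intro v i j l hij hjl hvi hvl
    rw [hmem] at hvi hvl ⊢
    rcases hvl with h1 | ⟨hlt, k, hk, hadj⟩
    · -- v = e l
      rcases hvi with h2 | ⟨hlt2, _⟩
      · -- v = e i and v = e l so i = l, hence j = i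
        have hil : i = l := e.injective (h2 ▸ h1 ▸ rfl)
        have : j = i := le_antisymm (hil ▸ hjl) hij
        left; rw [this, h2]
      · -- e.symm v < i but v = e l means e.symm v = l ≥ j ≥ i, contradiction
        exfalso
        have : e.symm v = l := by rw [h1]; simp
        rw [this] at hlt2
        exact absurd (lt_of_lt_of_le hlt2 (le_trans hij hjl)) (lt_irrefl _)
    · -- e.symm v < l and witness k ≥ l
      by_cases hcase : (e.symm v : ℕ) < (j : ℕ)
      · exact Or.inr ⟨hcase, k, le_trans hjl hk, hadj⟩
      · -- j ≤ e.symm v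
        push_neg at hcase
        rcases hvi with h2 | ⟨hlt2, _⟩
        · -- v = e i, so e.symm v = i ≤ j ≤ e.symm v, so j = e.symm v
          have hi : (e.symm v : ℕ) = (i : ℕ) := by rw [h2]; simp
          have : (j : ℕ) = (e.symm v : ℕ) :=
            le_antisymm hcase (hi ▸ hij)
          left
          have : e.symm v = j := Fin.ext this.symm
          rw [← this]; simp
        · exact absurd (lt_of_le_of_lt (le_trans hij hcase) hlt2) (lt_irrefl _)
  · intro i
    refine (Finset.card_insert_le _ _).trans ?_
    rw [Nat.add_le_add_iff_right]
    refine Finset.card_image_le.trans ?_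
    by_cases h0 : (i : ℕ) = 0
    · simp [h0]
    · have h1 : 1 ≤ (i : ℕ) := Nat.one_le_iff_ne_zero.mpr h0
      refine le_trans ?_ (hwidth i h1 i.isLt)
      have hsub : (Finset.univ.filter (fun j : Fin n =>
          (j : ℕ) < (i : ℕ) ∧ ∃ k : Fin n, (i : ℕ) ≤ (k : ℕ) ∧ G.Adj (e j) (e k))) ⊆
          (Finset.univ.filter (fun p : Fin n × Fin n =>
            (p.1 : ℕ) < (i : ℕ) ∧ (i : ℕ) ≤ (p.2 : ℕ) ∧ G.Adj (e p.1) (e p.2))).image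
            Prod.fst := by
        intro j hj
        simp only [Finset.mem_filter, Finset.mem_univ, true_and] at hj
        obtain ⟨hji, k, hk, hadj⟩ := hj
        exact Finset.mem_image.mpr ⟨(j, k), by
          simp only [Finset.mem_filter, Finset.mem_univ, true_and]
          exact ⟨hji, hk, hadj⟩, rfl⟩
      exact (Finset.card_le_card hsub).trans Finset.card_image_le
end
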